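/- arXiv:0704.0926 — 6 statements merged into one kernel-verified Lean document; each statement's English description precedes it below -/
import Mathlib

section
/- Let g : [0,∞) → ℝ be continuous, C ∈ ℝ and λ > 0. If for all 0 ≤ u ≤ t, g(t) − g(u) ≤ ∫_u^t (−λ g(s) + C) ds, then for all t ≥ 0, g(t) ≤ C/λ + max(0, g(0) − C/λ) · e^{−λ t}. -/
/-!
The integral inequality bounds the right Dini derivative of `g` by `-λ g + C`, so the Gronwall
comparison for such differential inequalities gives `g t ≤ gronwallBound δ (-λ) C t` with
`δ = max (g 0) (C / λ)`; this bound is `C / λ + (δ - C / λ) e^{-λ t}`.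
-/

open Set Filter Topology

/-- The difference quotients of `f` at `x` are dominated by those of `z ↦ ∫ s in x..z, F s`,
whose right derivative at `x` is `F x`. -/
theorem eventually_slope_lt_of_sub_le_integral {f F : ℝ → ℝ} {x r : ℝ}
    (hF : ContinuousOn F (Ici x)) (hf : ∀ z, x ≤ z → f z - f x ≤ ∫ s in x..z, F s)
    (hr : F x < r) : ∀ᶠ z in 𝓝[>] x, (z - x)⁻¹ * (f z - f x) < r := by
  have hderiv : HasDerivWithinAt (fun z => ∫ s in x..z, F s) (F x) (Ioi x) x :=
    (intervalIntegral.integral_hasDerivWithinAt_right (s := Ici x) (t := Ioi x) .refl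
      ((hF.mono Ioi_subset_Ici_self).stronglyMeasurableAtFilter_nhdsWithin measurableSet_Ioi x)
      ((hF x self_mem_Ici).mono Ioi_subset_Ici_self)).mono Ioi_subset_Ici_self
  have hslope := (hasDerivWithinAt_iff_tendsto_slope' (lt_irrefl x)).1 hderiv
  filter_upwards [hslope (Iio_mem_nhds hr), self_mem_nhdsWithin] with z hz hxz
  rw [mem_preimage, slope_def_field, intervalIntegral.integral_same, sub_zero, mem_Iio] at hz
  calc (z - x)⁻¹ * (f z - f x) ≤ (z - x)⁻¹ * ∫ s in x..z, F s :=
        mul_le_mul_of_nonneg_left (hf z hxz.le) (inv_nonneg.2 (sub_nonneg.2 hxz.le))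
    _ < r := by rwa [inv_mul_eq_div]

theorem gronwallBound_neg (δ ε lam x : ℝ) (hlam : lam ≠ 0) :
    gronwallBound δ (-lam) ε x = ε / lam + (δ - ε / lam) * Real.exp (-lam * x) := by
  rw [gronwallBound_of_K_ne_0 (neg_ne_zero.2 hlam), div_neg]
  ring

/-- A variation of Gronwall's lemma. -/
theorem gronwall_variant (g : ℝ → ℝ) (C lam : ℝ) (hlam : 0 < lam)
    (hg : ContinuousOn g (Set.Ici 0))
    (h : ∀ u t : ℝ, 0 ≤ u → u ≤ t → g t - g u ≤ ∫ s in u..t, (-lam * g s + C)) :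
    ∀ t : ℝ, 0 ≤ t → g t ≤ C / lam + max 0 (g 0 - C / lam) * Real.exp (-lam * t) := by
  intro t ht
  have hF : ContinuousOn (fun s => -lam * g s + C) (Ici 0) :=
    (continuousOn_const.mul hg).add continuousOn_const
  have hslope : ∀ x ∈ Ico 0 t, ∀ r, -lam * g x + C < r →
      ∃ᶠ z in 𝓝[>] x, (z - x)⁻¹ * (g z - g x) < r := fun x hx _ hr =>
    (eventually_slope_lt_of_sub_le_integral (hF.mono (Ici_subset_Ici.2 hx.1))
      (fun z hz => h x z hx.1 hz) hr).frequently
  have hbound := le_gronwallBound_of_liminf_deriv_right_le (K := -lam)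
    (hg.mono Icc_subset_Ici_self) hslope (le_max_left (g 0) (C / lam)) (fun _ _ => le_rfl)
    t ⟨ht, le_rfl⟩
  rwa [sub_zero, gronwallBound_neg _ _ _ _ hlam.ne', ← max_sub_sub_right, sub_self,
    max_comm] at hbound
end

section
/- Let f : ℝⁿ × ℝ → ℝⁿ be C¹ in its first argument and let M : ℝ → ℝⁿˣⁿ be a C¹ family of symmetric matrices such that uniformly M(t)(∂f/∂a)(c,t) + (∂f/∂a)(c,t)ᵀM(t) + M'(t) ≤ −2λ M(t) (as quadratic forms, for all c, t). Then for all a, b ∈ ℝⁿ and t, (a−b)ᵀ M'(t) (a−b) + 2(a−b)ᵀ M(t)(f(a,t) − f(b,t)) ≤ −2λ (a−b)ᵀ M(t)(a−b). -/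
/-!
With `v = a - b`, the derivative of `s ↦ vᵀ M f(b + s v)` is `vᵀ M J v`, and since `M` is
symmetric, `vᵀ (M J + Jᵀ M + M') v = 2 vᵀ M J v + vᵀ M' v`. So the hypothesis bounds that
derivative by `(-2λ vᵀ M v - vᵀ M' v) / 2`, and the mean value inequality on `[0, 1]` concludes.
-/

open Matrix

theorem Matrix.dotProduct_mulVec_mul_add_transpose_mul {n : Type*} [Fintype n]
    {M : Matrix n n ℝ} (hM : M.IsSymm) (J N : Matrix n n ℝ) (v : n → ℝ) :
    v ⬝ᵥ ((M * J + Jᵀ * M + N) *ᵥ v) = 2 * (v ⬝ᵥ (M *ᵥ (J *ᵥ v))) + v ⬝ᵥ (N *ᵥ v) := by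
  have hJM : v ⬝ᵥ ((Jᵀ * M) *ᵥ v) = v ⬝ᵥ ((M * J) *ᵥ v) := by
    rw [← hM.eq, ← transpose_mul, dotProduct_transpose_mulVec, hM.eq]
  rw [add_mulVec, add_mulVec, dotProduct_add, dotProduct_add, hJM, ← mulVec_mulVec]
  ring

theorem ContinuousLinearMap.map_sub_le_of_hasFDerivAt {E F : Type*}
    [NormedAddCommGroup E] [NormedSpace ℝ E] [NormedAddCommGroup F] [NormedSpace ℝ F]
    {g : E → F} {g' : E → E →L[ℝ] F} (hg : ∀ x, HasFDerivAt g (g' x) x) (ℓ : F →L[ℝ] ℝ)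
    {a b : E} {C : ℝ} (hC : ∀ x, ℓ (g' x (a - b)) ≤ C) : ℓ (g a) - ℓ (g b) ≤ C := by
  set φ : ℝ → ℝ := fun s => ℓ (g (b + s • (a - b)))
  have hφ : ∀ s, HasDerivAt φ (ℓ (g' (b + s • (a - b)) (a - b))) s := fun s => by
    have hline : HasDerivAt (fun s : ℝ => b + s • (a - b)) (a - b) s := by
      simpa using ((hasDerivAt_id s).smul_const (a - b)).const_add b
    exact ℓ.hasFDerivAt.comp_hasDerivAt s ((hg _).comp_hasDerivAt s hline)
  have hφ01 := image_sub_le_mul_sub_of_deriv_le (fun s => (hφ s).differentiableAt)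
    (fun s => (hφ s).deriv ▸ hC _) zero_le_one
  simpa [φ] using hφ01

theorem generalized_jacobian_contraction_bound_general {n : ℕ}
    (f : (Fin n → ℝ) → ℝ → (Fin n → ℝ))
    (J : (Fin n → ℝ) → ℝ → Matrix (Fin n) (Fin n) ℝ)
    (M M' : ℝ → Matrix (Fin n) (Fin n) ℝ) (lam : ℝ)
    (hMsymm : ∀ t, (M t).IsSymm)
    (hderiv : ∀ a t, HasFDerivAt (fun x => f x t)
      (LinearMap.toContinuousLinearMap (Matrix.mulVecLin (J a t))) a)
    (hbound : ∀ c t (v : Fin n → ℝ),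
      v ⬝ᵥ ((M t * J c t + (J c t)ᵀ * M t + M' t) *ᵥ v)
        ≤ -2 * lam * (v ⬝ᵥ (M t *ᵥ v))) :
    ∀ a b t,
      (a - b) ⬝ᵥ (M' t *ᵥ (a - b)) + 2 * ((a - b) ⬝ᵥ (M t *ᵥ (f a t - f b t)))
        ≤ -2 * lam * ((a - b) ⬝ᵥ (M t *ᵥ (a - b))) := by
  intro a b t
  set v := a - b
  let ℓ : (Fin n → ℝ) →L[ℝ] ℝ := LinearMap.toContinuousLinearMap (toLinearMap₂' ℝ (M t) v)
  have hℓ : ∀ w, ℓ w = v ⬝ᵥ (M t *ᵥ w) := toLinearMap₂'_apply' (M t) v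
  have hmvt : ℓ (f a t) - ℓ (f b t) ≤ (-2 * lam * (v ⬝ᵥ (M t *ᵥ v)) - v ⬝ᵥ (M' t *ᵥ v)) / 2 :=
    ℓ.map_sub_le_of_hasFDerivAt (fun x => hderiv x t) fun c => by
      have hc := hbound c t v
      rw [dotProduct_mulVec_mul_add_transpose_mul (hMsymm t)] at hc
      rw [hℓ, LinearMap.coe_toContinuousLinearMap', mulVecLin_apply, le_div_iff₀' two_pos]
      linarith
  rw [hℓ, hℓ, ← dotProduct_sub, ← mulVec_sub] at hmvt
  linarith

/-- Key deterministic inequality in the generalized stochastic contraction lemma. -/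
theorem generalized_jacobian_contraction_bound {n : ℕ}
    (f : (Fin n → ℝ) → ℝ → (Fin n → ℝ))
    (J : (Fin n → ℝ) → ℝ → Matrix (Fin n) (Fin n) ℝ)
    (M M' : ℝ → Matrix (Fin n) (Fin n) ℝ) (lam : ℝ)
    (hMsymm : ∀ t, (M t).IsSymm)
    (hM' : ∀ t i j, HasDerivAt (fun s => M s i j) (M' t i j) t)
    (hC1 : ∀ t, ContDiff ℝ 1 (fun a => f a t))
    (hderiv : ∀ a t, HasFDerivAt (fun x => f x t)
      (LinearMap.toContinuousLinearMap (Matrix.mulVecLin (J a t))) a)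
    (hbound : ∀ c t (v : Fin n → ℝ),
      v ⬝ᵥ ((M t * J c t + (J c t)ᵀ * M t + M' t) *ᵥ v)
        ≤ -2 * lam * (v ⬝ᵥ (M t *ᵥ v))) :
    ∀ a b t,
      (a - b) ⬝ᵥ (M' t *ᵥ (a - b)) + 2 * ((a - b) ⬝ᵥ (M t *ᵥ (f a t - f b t)))
        ≤ -2 * lam * ((a - b) ⬝ᵥ (M t *ᵥ (a - b))) :=
  generalized_jacobian_contraction_bound_general f J M M' lam hMsymm hderiv hbound
end

section
/- Let A be a symmetric block matrix A = [[A₁, A₂₁ᵀ], [A₂₁, A₂]] where A₁ and A₂ are symmetric positive definite. If the largest singular value s of A₂₁ satisfies s² < λ_min(A₁)·λ_min(A₂), then A is positive definite. -/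
/-!
For `x = (u, v)`, the quadratic form of the block matrix is
`uᵀA₁u + 2 vᵀA₂₁u + vᵀA₂v ≥ λ₁|u|² - 2s|u||v| + λ₂|v|²`, using the Rayleigh bounds
`λ_min(A) |x|² ≤ xᵀAx ≤ λ_max(A) |x|²` for the diagonal blocks and Cauchy–Schwarz together with
`|A₂₁u|² = uᵀA₂₁ᵀA₂₁u ≤ s²|u|²` for the cross term. The right-hand side is a binary quadratic form
in `(|u|, |v|)` whose coefficient matrix `[[λ₁, -s], [-s, λ₂]]` is positive definite exactly when
`s² < λ₁λ₂`.
-/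

open Matrix

/-- Smallest eigenvalue of a Hermitian real matrix. -/
noncomputable def lamMin {m : Type*} [Fintype m] [DecidableEq m]
    (A : Matrix m m ℝ) (hA : A.IsHermitian) : ℝ := ⨅ i, hA.eigenvalues i

/-- Largest eigenvalue of a Hermitian real matrix. -/
noncomputable def lamMax {m : Type*} [Fintype m] [DecidableEq m]
    (A : Matrix m m ℝ) (hA : A.IsHermitian) : ℝ := ⨆ i, hA.eigenvalues i

open scoped MatrixOrder

section Rayleigh

variable {m : Type*} [Fintype m] [DecidableEq m] {A : Matrix m m ℝ}

theorem lamMin_le_eigenvalues (hA : A.IsHermitian) (i : m) : lamMin A hA ≤ hA.eigenvalues i :=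
  ciInf_le (Set.finite_range _).bddBelow i

theorem eigenvalues_le_lamMax (hA : A.IsHermitian) (i : m) : hA.eigenvalues i ≤ lamMax A hA :=
  le_ciSup (Set.finite_range _).bddAbove i

theorem eigenvalues_le_sq_sqrt_lamMax (hA : A.IsHermitian) (i : m) :
    hA.eigenvalues i ≤ √(lamMax A hA) ^ 2 :=
  Real.sq_sqrt' ▸ (eigenvalues_le_lamMax hA i).trans (le_max_left _ _)

theorem Matrix.PosDef.lamMin_pos [Nonempty m] (hA : A.PosDef) : 0 < lamMin A hA.isHermitian := by
  obtain ⟨i, hi⟩ := exists_eq_ciInf_of_finite (f := hA.isHermitian.eigenvalues)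
  rw [lamMin, ← hi]
  exact hA.eigenvalues_pos i

theorem Matrix.IsHermitian.mul_dotProduct_self_le {c : ℝ} (hA : A.IsHermitian)
    (h : ∀ i, c ≤ hA.eigenvalues i) (x : m → ℝ) : c * (x ⬝ᵥ x) ≤ x ⬝ᵥ (A *ᵥ x) := by
  have hpsd : (A - c • 1).PosSemidef := by
    rw [← Matrix.le_iff, ← Algebra.algebraMap_eq_smul_one,
      algebraMap_le_iff_le_spectrum hA.isSelfAdjoint, hA.spectrum_real_eq_range_eigenvalues]
    rintro _ ⟨i, rfl⟩
    exact h i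
  simpa [sub_mulVec, dotProduct_sub, smul_mulVec, dotProduct_smul] using hpsd.dotProduct_mulVec_nonneg x

theorem Matrix.IsHermitian.dotProduct_mulVec_le {c : ℝ} (hA : A.IsHermitian)
    (h : ∀ i, hA.eigenvalues i ≤ c) (x : m → ℝ) : x ⬝ᵥ (A *ᵥ x) ≤ c * (x ⬝ᵥ x) := by
  have hpsd : (c • 1 - A).PosSemidef := by
    rw [← Matrix.le_iff, ← Algebra.algebraMap_eq_smul_one,
      le_algebraMap_iff_spectrum_le hA.isSelfAdjoint, hA.spectrum_real_eq_range_eigenvalues]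
    rintro _ ⟨i, rfl⟩
    exact h i
  simpa [sub_mulVec, dotProduct_sub, smul_mulVec, dotProduct_smul] using hpsd.dotProduct_mulVec_nonneg x

end Rayleigh

theorem sq_dotProduct_le {n R : Type*} [Fintype n] [CommRing R] [LinearOrder R]
    [IsStrictOrderedRing R] (v w : n → R) : (v ⬝ᵥ w) ^ 2 ≤ (v ⬝ᵥ v) * (w ⬝ᵥ w) := by
  simpa only [dotProduct, sq] using Finset.sum_mul_sq_le_sq_mul_sq Finset.univ v w

theorem sq_dotProduct_mulVec_le {m n : Type*} [Fintype m] [Fintype n] [DecidableEq m]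
    {B : Matrix n m ℝ} {σ : ℝ}
    (h : ∀ i, (isHermitian_conjTranspose_mul_self B).eigenvalues i ≤ σ) (u : m → ℝ)
    (v : n → ℝ) : (v ⬝ᵥ (B *ᵥ u)) ^ 2 ≤ σ * ((u ⬝ᵥ u) * (v ⬝ᵥ v)) := by
  have hBu : (B *ᵥ u) ⬝ᵥ (B *ᵥ u) ≤ σ * (u ⬝ᵥ u) := by
    have := (isHermitian_conjTranspose_mul_self B).dotProduct_mulVec_le h u
    rwa [conjTranspose_eq_transpose_of_trivial, ← mulVec_mulVec, dotProduct_mulVec,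
      vecMul_transpose] at this
  calc (v ⬝ᵥ (B *ᵥ u)) ^ 2 ≤ (v ⬝ᵥ v) * ((B *ᵥ u) ⬝ᵥ (B *ᵥ u)) := sq_dotProduct_le _ _
    _ ≤ (v ⬝ᵥ v) * (σ * (u ⬝ᵥ u)) :=
      mul_le_mul_of_nonneg_left hBu (by simpa using dotProduct_star_self_nonneg v)
    _ = σ * ((u ⬝ᵥ u) * (v ⬝ᵥ v)) := by ring

theorem sumElim_dotProduct_fromBlocks_mulVec {m n R : Type*} [Fintype m] [Fintype n]
    [CommSemiring R] (A : Matrix m m R) (B : Matrix n m R) (D : Matrix n n R) (u : m → R)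
    (v : n → R) :
    Sum.elim u v ⬝ᵥ (fromBlocks A Bᵀ B D *ᵥ Sum.elim u v) =
      u ⬝ᵥ (A *ᵥ u) + 2 * (v ⬝ᵥ (B *ᵥ u)) + v ⬝ᵥ (D *ᵥ v) := by
  simp only [fromBlocks_mulVec, Sum.elim_comp_inl, Sum.elim_comp_inr, sumElim_dotProduct_sumElim,
    dotProduct_add]
  rw [dotProduct_mulVec u Bᵀ v, vecMul_transpose, dotProduct_comm (B *ᵥ u)]
  ring

theorem mul_add_two_mul_add_mul_pos {l₁ l₂ P Q c σ : ℝ} (hl₁ : 0 < l₁) (hσ₀ : 0 ≤ σ)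
    (hσ : σ < l₁ * l₂) (hP : 0 ≤ P) (hQ : 0 ≤ Q) (hPQ : 0 < P + Q)
    (hc : c ^ 2 ≤ σ * (P * Q)) : 0 < l₁ * P + 2 * c + l₂ * Q := by
  have hl₂ : 0 < l₂ := pos_of_mul_pos_right (hσ₀.trans_lt hσ) hl₁.le
  rcases (mul_nonneg hP hQ).eq_or_lt with hPQ₀ | hPQ₀
  · obtain rfl : c = 0 := by simpa [← hPQ₀] using hc
    rcases mul_eq_zero.1 hPQ₀.symm with rfl | rfl <;> nlinarith
  · -- `l₁ P (l₁ P + 2c + l₂ Q) = (l₁ P + c)² + (l₁ l₂ - σ) P Q + (σ P Q - c²)`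
    refine pos_of_mul_pos_right (a := l₁ * P) ?_ (by positivity)
    nlinarith [sq_nonneg (l₁ * P + c), mul_pos (sub_pos.2 hσ) hPQ₀]

/-- A symmetric block matrix with positive definite diagonal blocks is positive
definite if the largest singular value of the off-diagonal block is small enough. -/
theorem block_posdef {n₁ n₂ : ℕ} [NeZero n₁] [NeZero n₂]
    (A₁ : Matrix (Fin n₁) (Fin n₁) ℝ) (A₂ : Matrix (Fin n₂) (Fin n₂) ℝ)
    (A₂₁ : Matrix (Fin n₂) (Fin n₁) ℝ)
    (h₁ : A₁.PosDef) (h₂ : A₂.PosDef)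
    (s : ℝ)
    (hs : s = Real.sqrt (lamMax (A₂₁ᴴ * A₂₁) (Matrix.isHermitian_conjTranspose_mul_self A₂₁)))
    (hlt : s ^ 2 < lamMin A₁ h₁.isHermitian * lamMin A₂ h₂.isHermitian) :
    (Matrix.fromBlocks A₁ A₂₁ᵀ A₂₁ A₂).PosDef := by
  have hHerm : (fromBlocks A₁ A₂₁ᵀ A₂₁ A₂).IsHermitian :=
    h₁.isHermitian.fromBlocks (by rw [conjTranspose_eq_transpose_of_trivial, transpose_transpose])
      h₂.isHermitian
  refine .of_dotProduct_mulVec_pos hHerm fun x hx => ?_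
  obtain ⟨u, v, rfl⟩ : ∃ u v, x = Sum.elim u v :=
    ⟨x ∘ Sum.inl, x ∘ Sum.inr, (Sum.elim_comp_inl_inr x).symm⟩
  have hnorm : 0 < u ⬝ᵥ u + v ⬝ᵥ v := by
    simpa [sumElim_dotProduct_sumElim] using dotProduct_star_self_pos_iff.2 hx
  have hcross := sq_dotProduct_mulVec_le (hs ▸ eigenvalues_le_sq_sqrt_lamMax _) u v
  have hform := mul_add_two_mul_add_mul_pos h₁.lamMin_pos (sq_nonneg s) hlt
    (by simpa using dotProduct_star_self_nonneg u) (by simpa using dotProduct_star_self_nonneg v)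
    hnorm hcross
  rw [star_trivial, sumElim_dotProduct_fromBlocks_mulVec]
  linarith [h₁.isHermitian.mul_dotProduct_self_le (lamMin_le_eigenvalues _) u,
    h₂.isHermitian.mul_dotProduct_self_le (lamMin_le_eigenvalues _) v]
end

section
/- Let A = [[A₁, A₂₁ᵀ], [A₂₁, A₂]] be a symmetric block matrix with A₁, A₂ symmetric positive definite, and let s be the largest singular value of A₂₁ with s² < λ_min(A₁)·λ_min(A₂). Then λ_min(A) ≥ (λ_min(A₁)+λ_min(A₂))/2 − sqrt( ((λ_min(A₁)−λ_min(A₂))/2)² + s² ). -/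
/-!
Split `x = (x₁, x₂)` along the blocks and put `aᵢ = ‖xᵢ‖`. The Rayleigh bounds for the diagonal
blocks and `‖A₂₁ x₁‖ ≤ s ‖x₁‖` for the off-diagonal one give
`xᵀ A x ≥ λ₁ a₁² + λ₂ a₂² - 2 s a₁ a₂`, the quadratic form of the `2 × 2` matrix
`[[λ₁, -s], [-s, λ₂]]` at `(a₁, a₂)`. Its smallest eigenvalue is exactly the claimed bound.
-/

open Matrix

lemma sub_sqrt_mul_sq_add_sq_le (α β s a b : ℝ) :
    ((α + β) / 2 - √(((α - β) / 2) ^ 2 + s ^ 2)) * (a ^ 2 + b ^ 2) ≤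
      α * a ^ 2 + β * b ^ 2 - 2 * s * a * b := by
  set δ := (α - β) / 2
  set d := √(δ ^ 2 + s ^ 2)
  have hd : d ^ 2 = δ ^ 2 + s ^ 2 := Real.sq_sqrt (by positivity)
  have hδ : |δ| ≤ d := Real.abs_le_sqrt (by nlinarith)
  suffices 0 ≤ (d + δ) * a ^ 2 + (d - δ) * b ^ 2 - 2 * s * a * b by
    linear_combination this
  obtain hd0 | hd0 := ((abs_nonneg δ).trans hδ).eq_or_lt
  · have hs : s = 0 := by nlinarith
    have hδ0 : δ = 0 := by nlinarith
    simp [hs, hδ0, ← hd0]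
  · -- zero discriminant, `s ^ 2 = (d + δ) * (d - δ)`: the form is a square up to the factor `2 * d`
    have : 0 ≤ 2 * d * ((d + δ) * a ^ 2 + (d - δ) * b ^ 2 - 2 * s * a * b) := by
      nlinarith [sq_nonneg ((d + δ) * a - s * b), sq_nonneg ((d - δ) * b - s * a)]
    exact (mul_nonneg_iff_of_pos_left (by positivity)).mp this

section Rayleigh

variable {n : Type*} [Fintype n]

lemma star_mulVec_dotProduct (V : Matrix n n ℝ) (x y : n → ℝ) :
    (star V *ᵥ x) ⬝ᵥ y = x ⬝ᵥ V *ᵥ y := by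
  rw [star_eq_conjTranspose, conjTranspose_eq_transpose_of_trivial, mulVec_transpose,
    dotProduct_mulVec]

variable [DecidableEq n] {A : Matrix n n ℝ}

lemma Matrix.IsHermitian.dotProduct_mulVec_eq_sum_eigenvalues_mul_sq (hA : A.IsHermitian)
    (x : n → ℝ) :
    x ⬝ᵥ A *ᵥ x =
      ∑ i, hA.eigenvalues i * (star (hA.eigenvectorUnitary : Matrix n n ℝ) *ᵥ x) i ^ 2 := by
  conv_lhs => rw [hA.spectral_theorem, Unitary.conjStarAlgAut_apply]
  rw [← mulVec_mulVec, ← mulVec_mulVec, ← star_mulVec_dotProduct]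
  simp [dotProduct, mulVec_diagonal, sq, mul_left_comm]

lemma dotProduct_self_star_unitary_mulVec (U : unitaryGroup n ℝ) (x : n → ℝ) :
    (star (U : Matrix n n ℝ) *ᵥ x) ⬝ᵥ (star (U : Matrix n n ℝ) *ᵥ x) = x ⬝ᵥ x := by
  rw [star_mulVec_dotProduct, mulVec_mulVec, mem_unitaryGroup_iff.mp U.2, one_mulVec]

lemma lamMin_mul_dotProduct_self_le (hA : A.IsHermitian) (x : n → ℝ) :
    lamMin A hA * (x ⬝ᵥ x) ≤ x ⬝ᵥ A *ᵥ x := by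
  rw [hA.dotProduct_mulVec_eq_sum_eigenvalues_mul_sq,
    ← dotProduct_self_star_unitary_mulVec hA.eigenvectorUnitary, dotProduct, Finset.mul_sum]
  refine Finset.sum_le_sum fun i _ => ?_
  rw [← sq]
  exact mul_le_mul_of_nonneg_right (ciInf_le (Finite.bddBelow_range _) i) (sq_nonneg _)

lemma dotProduct_mulVec_le_lamMax_mul (hA : A.IsHermitian) (x : n → ℝ) :
    x ⬝ᵥ A *ᵥ x ≤ lamMax A hA * (x ⬝ᵥ x) := by
  rw [hA.dotProduct_mulVec_eq_sum_eigenvalues_mul_sq,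
    ← dotProduct_self_star_unitary_mulVec hA.eigenvectorUnitary, dotProduct, Finset.mul_sum]
  refine Finset.sum_le_sum fun i _ => ?_
  rw [← sq]
  exact mul_le_mul_of_nonneg_right (le_ciSup (Finite.bddAbove_range _) i) (sq_nonneg _)

lemma le_lamMin_of_forall_le_dotProduct [Nonempty n] (hA : A.IsHermitian) {μ : ℝ}
    (h : ∀ x : n → ℝ, μ * (x ⬝ᵥ x) ≤ x ⬝ᵥ A *ᵥ x) : μ ≤ lamMin A hA := by
  refine le_ciInf fun i => ?_
  have hv : (hA.eigenvectorBasis i : n → ℝ) ⬝ᵥ hA.eigenvectorBasis i = 1 := by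
    have := hA.eigenvectorBasis.inner_eq_one i
    rwa [EuclideanSpace.inner_eq_star_dotProduct, star_trivial] at this
  simpa [hA.eigenvalues_eq i, hv, dotProduct_comm] using h (hA.eigenvectorBasis i)

end Rayleigh

lemma lamMax_conjTranspose_mul_self_nonneg {m n : Type*} [Fintype m] [Fintype n] [DecidableEq n]
    (B : Matrix m n ℝ) : 0 ≤ lamMax (Bᴴ * B) (isHermitian_conjTranspose_mul_self B) :=
  Real.iSup_nonneg (eigenvalues_conjTranspose_mul_self_nonneg B)

lemma mulVec_dotProduct_self_le_lamMax {m n : Type*} [Fintype m] [Fintype n] [DecidableEq n]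
    (B : Matrix m n ℝ) (x : n → ℝ) :
    (B *ᵥ x) ⬝ᵥ (B *ᵥ x) ≤ lamMax (Bᴴ * B) (isHermitian_conjTranspose_mul_self B) * (x ⬝ᵥ x) := by
  have hform : x ⬝ᵥ (Bᴴ * B) *ᵥ x = (B *ᵥ x) ⬝ᵥ (B *ᵥ x) := by
    rw [← mulVec_mulVec, dotProduct_mulVec, conjTranspose_eq_transpose_of_trivial,
      vecMul_transpose]
  exact hform ▸ dotProduct_mulVec_le_lamMax_mul _ x

lemma neg_mulVec_dotProduct_le {m n : Type*} [Fintype m] [Fintype n] {B : Matrix m n ℝ} {s : ℝ}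
    (hs : 0 ≤ s) (hB : ∀ x, (B *ᵥ x) ⬝ᵥ (B *ᵥ x) ≤ s ^ 2 * (x ⬝ᵥ x)) (x : n → ℝ) (y : m → ℝ) :
    -((B *ᵥ x) ⬝ᵥ y) ≤ s * √(x ⬝ᵥ x) * √(y ⬝ᵥ y) := by
  calc -((B *ᵥ x) ⬝ᵥ y) = ∑ i, (-(B *ᵥ x)) i * y i := by simp [dotProduct]
    _ ≤ √(∑ i, (-(B *ᵥ x)) i ^ 2) * √(∑ i, y i ^ 2) := Real.sum_mul_le_sqrt_mul_sqrt _ _ _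
    _ = √((B *ᵥ x) ⬝ᵥ (B *ᵥ x)) * √(y ⬝ᵥ y) := by simp [dotProduct, sq]
    _ ≤ √(s ^ 2 * (x ⬝ᵥ x)) * √(y ⬝ᵥ y) := by gcongr; exact hB x
    _ = s * √(x ⬝ᵥ x) * √(y ⬝ᵥ y) := by rw [Real.sqrt_mul (sq_nonneg s), Real.sqrt_sq hs]

section Blocks

variable {R m n : Type*} [CommSemiring R] [Fintype m] [Fintype n]

lemma dotProduct_self_eq_inl_add_inr (x : m ⊕ n → R) :
    x ⬝ᵥ x = (x ∘ Sum.inl) ⬝ᵥ (x ∘ Sum.inl) + (x ∘ Sum.inr) ⬝ᵥ (x ∘ Sum.inr) := by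
  simp [dotProduct, Fintype.sum_sum_type]

lemma dotProduct_fromBlocks_transpose_mulVec (A : Matrix m m R) (B : Matrix n m R)
    (D : Matrix n n R) (x : m ⊕ n → R) :
    x ⬝ᵥ fromBlocks A Bᵀ B D *ᵥ x = (x ∘ Sum.inl) ⬝ᵥ A *ᵥ (x ∘ Sum.inl) +
      (x ∘ Sum.inr) ⬝ᵥ D *ᵥ (x ∘ Sum.inr) + 2 * ((B *ᵥ (x ∘ Sum.inl)) ⬝ᵥ (x ∘ Sum.inr)) := by
  conv_lhs => rw [← Sum.elim_comp_inl_inr x, fromBlocks_mulVec, sumElim_dotProduct_sumElim]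
  simp only [Sum.elim_comp_inl, Sum.elim_comp_inr, dotProduct_add]
  rw [dotProduct_mulVec _ Bᵀ, vecMul_transpose, dotProduct_comm _ (B *ᵥ _)]
  ring

end Blocks

theorem le_lamMin_fromBlocks {m n : Type*} [Fintype m] [Fintype n] [DecidableEq m]
    [DecidableEq n] [Nonempty (m ⊕ n)] {A : Matrix m m ℝ} {D : Matrix n n ℝ} {B : Matrix n m ℝ}
    (hA : A.IsHermitian) (hD : D.IsHermitian) {s : ℝ} (hs : 0 ≤ s)
    (hB : ∀ x, (B *ᵥ x) ⬝ᵥ (B *ᵥ x) ≤ s ^ 2 * (x ⬝ᵥ x))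
    (hM : (fromBlocks A Bᵀ B D).IsHermitian) :
    (lamMin A hA + lamMin D hD) / 2 - √(((lamMin A hA - lamMin D hD) / 2) ^ 2 + s ^ 2) ≤
      lamMin _ hM := by
  refine le_lamMin_of_forall_le_dotProduct hM fun x => ?_
  set x₁ := x ∘ Sum.inl
  set x₂ := x ∘ Sum.inr
  set a := √(x₁ ⬝ᵥ x₁)
  set b := √(x₂ ⬝ᵥ x₂)
  have ha : x₁ ⬝ᵥ x₁ = a ^ 2 := (Real.sq_sqrt (by simpa using dotProduct_star_self_nonneg x₁)).symm
  have hb : x₂ ⬝ᵥ x₂ = b ^ 2 := (Real.sq_sqrt (by simpa using dotProduct_star_self_nonneg x₂)).symm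
  have h₁ : lamMin A hA * a ^ 2 ≤ x₁ ⬝ᵥ A *ᵥ x₁ := ha ▸ lamMin_mul_dotProduct_self_le hA x₁
  have h₂ : lamMin D hD * b ^ 2 ≤ x₂ ⬝ᵥ D *ᵥ x₂ := hb ▸ lamMin_mul_dotProduct_self_le hD x₂
  rw [dotProduct_fromBlocks_transpose_mulVec, dotProduct_self_eq_inl_add_inr, ha, hb]
  linarith [neg_mulVec_dotProduct_le hs hB x₁ x₂,
    sub_sqrt_mul_sq_add_sq_le (lamMin A hA) (lamMin D hD) s a b]

theorem block_lamMin_bound_general {n₁ n₂ : ℕ} [NeZero n₁]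
    (A₁ : Matrix (Fin n₁) (Fin n₁) ℝ) (A₂ : Matrix (Fin n₂) (Fin n₂) ℝ)
    (A₂₁ : Matrix (Fin n₂) (Fin n₁) ℝ)
    (h₁ : A₁.PosDef) (h₂ : A₂.PosDef)
    (s : ℝ)
    (hs : s = Real.sqrt (lamMax (A₂₁ᴴ * A₂₁) (Matrix.isHermitian_conjTranspose_mul_self A₂₁)))
    (hA : (Matrix.fromBlocks A₁ A₂₁ᵀ A₂₁ A₂).IsHermitian) :
    lamMin _ hA ≥
      (lamMin A₁ h₁.isHermitian + lamMin A₂ h₂.isHermitian) / 2 -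
        Real.sqrt (((lamMin A₁ h₁.isHermitian - lamMin A₂ h₂.isHermitian) / 2) ^ 2 + s ^ 2) := by
  have hs_sq : s ^ 2 = lamMax (A₂₁ᴴ * A₂₁) (isHermitian_conjTranspose_mul_self A₂₁) := by
    rw [hs, Real.sq_sqrt (lamMax_conjTranspose_mul_self_nonneg A₂₁)]
  exact le_lamMin_fromBlocks h₁.isHermitian h₂.isHermitian (hs ▸ Real.sqrt_nonneg _)
    (hs_sq ▸ mulVec_dotProduct_self_le_lamMax A₂₁) hA

/-- Lower bound on the smallest eigenvalue of a symmetric block matrix. -/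
theorem block_lamMin_bound {n₁ n₂ : ℕ} [NeZero n₁] [NeZero n₂]
    (A₁ : Matrix (Fin n₁) (Fin n₁) ℝ) (A₂ : Matrix (Fin n₂) (Fin n₂) ℝ)
    (A₂₁ : Matrix (Fin n₂) (Fin n₁) ℝ)
    (h₁ : A₁.PosDef) (h₂ : A₂.PosDef)
    (s : ℝ)
    (hs : s = Real.sqrt (lamMax (A₂₁ᴴ * A₂₁) (Matrix.isHermitian_conjTranspose_mul_self A₂₁)))
    (hlt : s ^ 2 < lamMin A₁ h₁.isHermitian * lamMin A₂ h₂.isHermitian)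
    (hA : (Matrix.fromBlocks A₁ A₂₁ᵀ A₂₁ A₂).IsHermitian) :
    lamMin _ hA ≥
      (lamMin A₁ h₁.isHermitian + lamMin A₂ h₂.isHermitian) / 2 -
        Real.sqrt (((lamMin A₁ h₁.isHermitian - lamMin A₂ h₂.isHermitian) / 2) ^ 2 + s ^ 2) :=
  block_lamMin_bound_general A₁ A₂ A₂₁ h₁ h₂ s hs hA
end

section
/- Let J be the 2×2 real matrix [[−α, 1], [−α², 0]] for α > 0, and let M_α = (1/2)·[[α², −α/2], [−α/2, 1]]. Then M_α is positive definite, and M_α J + Jᵀ M_α ≤ −α M_α (as quadratic forms), i.e. the system ẋ = Jx is contracting with rate α/2 in the metric M_α. -/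
open Matrix

/-!
`2M_α` is positive definite because its leading entry `α²` and its determinant `3α²/4` are positive.
The contraction inequality is in fact an equality: `M_α J + Jᵀ M_α = -α M_α` as matrices.
-/

theorem posDef_fin_two_of_pos_of_det_pos {a b d : ℝ} (ha : 0 < a) (hdet : 0 < a * d - b ^ 2) :
    (!![a, b; b, d] : Matrix (Fin 2) (Fin 2) ℝ).PosDef := by
  rw [posDef_iff_dotProduct_mulVec]
  refine ⟨by ext i j; fin_cases i <;> fin_cases j <;> rfl, fun x hx => ?_⟩
  have hquad : star x ⬝ᵥ (!![a, b; b, d] *ᵥ x) =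
      a * x 0 ^ 2 + 2 * b * x 0 * x 1 + d * x 1 ^ 2 := by
    simp only [star_trivial, dotProduct, mulVec, Fin.sum_univ_two, of_apply, cons_val',
      cons_val_zero, cons_val_one, empty_val', cons_val_fin_one]
    ring
  rw [hquad]
  by_cases hx1 : x 1 = 0
  · have hx0 : x 0 ≠ 0 := fun hx0 => hx (funext fun i => by fin_cases i <;> assumption)
    rw [hx1]
    nlinarith [mul_pos ha (pow_pos (abs_pos.mpr hx0) 2), sq_abs (x 0)]
  · have hx1sq : 0 < x 1 ^ 2 := by positivity
    -- completing the square: `a · xᵀMx = (a x₀ + b x₁)² + (ad - b²) x₁²`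
    nlinarith [sq_nonneg (a * x 0 + b * x 1), mul_pos hdet hx1sq]

theorem composite_observer_lyapunov_eq (α : ℝ) :
    ((1 / 2 : ℝ) • !![α ^ 2, -α / 2; -α / 2, 1]) * !![-α, 1; -α ^ 2, 0] +
        (!![-α, 1; -α ^ 2, 0] : Matrix (Fin 2) (Fin 2) ℝ)ᵀ *
          ((1 / 2 : ℝ) • !![α ^ 2, -α / 2; -α / 2, 1]) =
      -α • ((1 / 2 : ℝ) • !![α ^ 2, -α / 2; -α / 2, 1]) := by
  ext i j
  fin_cases i <;> fin_cases j <;> simp [mul_apply, Fin.sum_univ_two] <;> ring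

/-- The composite-variable observer system is contracting with rate α/2 in the
metric M_α. -/
theorem composite_observer_contracting (α : ℝ) (hα : 0 < α) :
    ((1 / 2 : ℝ) • !![α ^ 2, -α / 2; -α / 2, 1] : Matrix (Fin 2) (Fin 2) ℝ).PosDef ∧
    ∀ v : Fin 2 → ℝ,
      v ⬝ᵥ ((((1 / 2 : ℝ) • !![α ^ 2, -α / 2; -α / 2, 1]) * !![-α, 1; -α ^ 2, 0] +
              (!![-α, 1; -α ^ 2, 0] : Matrix (Fin 2) (Fin 2) ℝ)ᵀ *
                ((1 / 2 : ℝ) • !![α ^ 2, -α / 2; -α / 2, 1])) *ᵥ v)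
        ≤ -α * (v ⬝ᵥ (((1 / 2 : ℝ) • !![α ^ 2, -α / 2; -α / 2, 1]) *ᵥ v)) := by
  refine ⟨?_, fun v => le_of_eq ?_⟩
  · refine (posDef_fin_two_of_pos_of_det_pos (by positivity) ?_).smul
      (by norm_num : (0 : ℝ) < 1 / 2)
    nlinarith [pow_pos hα 4]
  · rw [composite_observer_lyapunov_eq, smul_mulVec, dotProduct_smul, smul_eq_mul]
end

section
/- Let Θ₁, Θ₂ be invertible matrices with (Θ₁J₁Θ₁⁻¹)_s ≤ −λ₁I and (Θ₂J₂Θ₂⁻¹)_s ≤ −λ₂I, J₁₂ = 0, and the largest singular value of Θ₂J₂₁Θ₁⁻¹ squared at most K > 0. Let ε = sqrt(2λ₁λ₂/K) and Θ_ε = diag(Θ₁, εΘ₂). Then the symmetric part of Θ_ε [[J₁,0],[J₂₁,J₂]] Θ_ε⁻¹ has largest eigenvalue at most −(1/2)(λ₁ + λ₂ − sqrt(λ₁² + λ₂²)). -/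
/-!
Conjugation by `Θ_ε = diag(Θ₁, εΘ₂)` keeps the Jacobian block lower-triangular, with diagonal
blocks `Θ₁J₁Θ₁⁻¹`, `Θ₂J₂Θ₂⁻¹` and off-diagonal block `εΘ₂J₂₁Θ₁⁻¹`. For `v = (x, y)` with
`a = ‖x‖`, `b = ‖y‖`, Cauchy–Schwarz bounds the quadratic form by `-λ₁a² + ε√K·ab - λ₂b²`, the
quadratic form of the symmetric `2 × 2` matrix `[[-λ₁, ε√K/2], [ε√K/2, -λ₂]]`. The scaling is
chosen so that `ε√K = √(2λ₁λ₂)`, and then the largest eigenvalue of that matrix is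
`-(λ₁ + λ₂ - √(λ₁² + λ₂²))/2`.
-/

open Matrix

/-- Symmetric part of a square matrix. -/
noncomputable def symPart {m : Type*} [Fintype m] (A : Matrix m m ℝ) : Matrix m m ℝ :=
  (1 / 2 : ℝ) • (A + Aᵀ)

/-- The left-hand factor is the smaller eigenvalue of `!![μ₁, -s; -s, μ₂]`. -/
theorem min_eigenvalue_mul_sq_add_sq_le (μ₁ μ₂ s a b : ℝ) :
    ((μ₁ + μ₂) / 2 - √(((μ₁ - μ₂) / 2) ^ 2 + s ^ 2)) * (a ^ 2 + b ^ 2) ≤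
      μ₁ * a ^ 2 - 2 * s * (a * b) + μ₂ * b ^ 2 := by
  set d := (μ₁ - μ₂) / 2
  set r := √(d ^ 2 + s ^ 2)
  have hr : r ^ 2 = d ^ 2 + s ^ 2 := Real.sq_sqrt (by positivity)
  have hr0 : 0 ≤ r := Real.sqrt_nonneg _
  have hgap : 0 ≤ (r + d) * a ^ 2 - 2 * s * (a * b) + (r - d) * b ^ 2 := by
    rcases hr0.eq_or_lt with hr_zero | hrpos
    · have hd : d = 0 := by nlinarith [sq_nonneg d, sq_nonneg s]
      have hs : s = 0 := by nlinarith [sq_nonneg d, sq_nonneg s]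
      simp [← hr_zero, hd, hs]
    · have hsum : 2 * r * ((r + d) * a ^ 2 - 2 * s * (a * b) + (r - d) * b ^ 2) =
          ((r + d) * a - s * b) ^ 2 + ((r - d) * b - s * a) ^ 2 := by
        linear_combination (a ^ 2 + b ^ 2) * hr
      have : 0 ≤ 2 * r * ((r + d) * a ^ 2 - 2 * s * (a * b) + (r - d) * b ^ 2) := by
        rw [hsum]; positivity
      exact nonneg_of_mul_nonneg_right this (by positivity)
  linear_combination hgap

namespace Matrix

variable {m n : Type*} [Fintype m] [Fintype n]

theorem dotProduct_symPart_mulVec (A : Matrix m m ℝ) (v : m → ℝ) :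
    v ⬝ᵥ (symPart A *ᵥ v) = v ⬝ᵥ (A *ᵥ v) := by
  have htranspose : v ⬝ᵥ (Aᵀ *ᵥ v) = v ⬝ᵥ (A *ᵥ v) := by
    rw [mulVec_transpose, dotProduct_comm, dotProduct_mulVec]
  simp only [symPart, smul_mulVec, add_mulVec, dotProduct_smul, dotProduct_add, htranspose,
    smul_eq_mul]
  ring

theorem dotProduct_mulVec_le_of_forall_mulVec_dotProduct_le {B : Matrix n m ℝ} {κ : ℝ}
    (hB : ∀ x, (B *ᵥ x) ⬝ᵥ (B *ᵥ x) ≤ κ * (x ⬝ᵥ x)) (x : m → ℝ) (y : n → ℝ) :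
    y ⬝ᵥ (B *ᵥ x) ≤ √κ * (√(x ⬝ᵥ x) * √(y ⬝ᵥ y)) :=
  calc y ⬝ᵥ (B *ᵥ x) ≤ √(y ⬝ᵥ y) * √((B *ᵥ x) ⬝ᵥ (B *ᵥ x)) := by
        simpa [dotProduct, sq] using Real.sum_mul_le_sqrt_mul_sqrt Finset.univ y (B *ᵥ x)
    _ ≤ √(y ⬝ᵥ y) * √(κ * (x ⬝ᵥ x)) := by gcongr; exact hB x
    _ = √κ * (√(x ⬝ᵥ x) * √(y ⬝ᵥ y)) := by
      rw [Real.sqrt_mul' _ (y := x ⬝ᵥ x) (dotProduct_self_star_nonneg x)]; ring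

theorem dotProduct_fromBlocks_zero₁₂_mulVec (A : Matrix m m ℝ) (C : Matrix n m ℝ)
    (D : Matrix n n ℝ) (x : m → ℝ) (y : n → ℝ) :
    Sum.elim x y ⬝ᵥ (fromBlocks A 0 C D *ᵥ Sum.elim x y) =
      x ⬝ᵥ (A *ᵥ x) + y ⬝ᵥ (C *ᵥ x) + y ⬝ᵥ (D *ᵥ y) := by
  simp only [fromBlocks_mulVec, Sum.elim_comp_inl, Sum.elim_comp_inr, zero_mulVec, add_zero,
    sumElim_dotProduct_sumElim, dotProduct_add]
  ring

theorem dotProduct_fromBlocks_zero₁₂_mulVec_le {μ₁ μ₂ κ : ℝ} (hκ : 0 ≤ κ) {A : Matrix m m ℝ}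
    {C : Matrix n m ℝ} {D : Matrix n n ℝ} (hA : ∀ x, x ⬝ᵥ (A *ᵥ x) ≤ -μ₁ * (x ⬝ᵥ x))
    (hD : ∀ y, y ⬝ᵥ (D *ᵥ y) ≤ -μ₂ * (y ⬝ᵥ y))
    (hC : ∀ x, (C *ᵥ x) ⬝ᵥ (C *ᵥ x) ≤ κ * (x ⬝ᵥ x)) (v : m ⊕ n → ℝ) :
    v ⬝ᵥ (fromBlocks A 0 C D *ᵥ v) ≤
      -((μ₁ + μ₂) / 2 - √(((μ₁ - μ₂) / 2) ^ 2 + κ / 4)) * (v ⬝ᵥ v) := by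
  rw [← Sum.elim_comp_inl_inr v, dotProduct_fromBlocks_zero₁₂_mulVec, sumElim_dotProduct_sumElim]
  set x := v ∘ Sum.inl
  set y := v ∘ Sum.inr
  have hcross := dotProduct_mulVec_le_of_forall_mulVec_dotProduct_le hC x y
  have heig := min_eigenvalue_mul_sq_add_sq_le μ₁ μ₂ (√κ / 2) √(x ⬝ᵥ x) √(y ⬝ᵥ y)
  have hs : (√κ / 2) ^ 2 = κ / 4 := by rw [div_pow, Real.sq_sqrt hκ]; norm_num
  have hx : 0 ≤ x ⬝ᵥ x := dotProduct_self_star_nonneg x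
  have hy : 0 ≤ y ⬝ᵥ y := dotProduct_self_star_nonneg y
  rw [hs, Real.sq_sqrt hx, Real.sq_sqrt hy] at heig
  linarith [hA x, hD y]

theorem fromBlocks_diagonal_conj_fromBlocks_zero₁₂ {α : Type*} [CommRing α] [DecidableEq m]
    [DecidableEq n] {P : Matrix m m α} {Q : Matrix n n α} (hP : IsUnit P.det) (hQ : IsUnit Q.det)
    (A : Matrix m m α) (C : Matrix n m α) (D : Matrix n n α) :
    fromBlocks P 0 0 Q * fromBlocks A 0 C D * (fromBlocks P 0 0 Q)⁻¹ =
      fromBlocks (P * A * P⁻¹) 0 (Q * C * P⁻¹) (Q * D * Q⁻¹) := by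
  have hPQ : IsUnit P ↔ IsUnit Q := by
    simp only [isUnit_iff_isUnit_det, hP, hQ]
  rw [inv_fromBlocks_zero₁₂_of_isUnit_iff P 0 Q hPQ, fromBlocks_multiply, fromBlocks_multiply]
  simp [Matrix.mul_assoc]

end Matrix

/-- Hierarchical combination property: with the scaling ε = sqrt(2λ₁λ₂/K), the
symmetric part of the generalized Jacobian of the hierarchical combination has
largest eigenvalue at most −(1/2)(λ₁ + λ₂ − sqrt(λ₁² + λ₂²)). -/
theorem hierarchical_combination {n₁ n₂ : ℕ}
    (Θ₁ J₁ : Matrix (Fin n₁) (Fin n₁) ℝ) (Θ₂ J₂ : Matrix (Fin n₂) (Fin n₂) ℝ)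
    (J₂₁ : Matrix (Fin n₂) (Fin n₁) ℝ)
    (lam₁ lam₂ K : ℝ) (hlam₁ : 0 < lam₁) (hlam₂ : 0 < lam₂) (hK : 0 < K)
    (hΘ₁ : IsUnit Θ₁.det) (hΘ₂ : IsUnit Θ₂.det)
    (h₁ : ∀ v : Fin n₁ → ℝ, v ⬝ᵥ (symPart (Θ₁ * J₁ * Θ₁⁻¹) *ᵥ v) ≤ -lam₁ * (v ⬝ᵥ v))
    (h₂ : ∀ v : Fin n₂ → ℝ, v ⬝ᵥ (symPart (Θ₂ * J₂ * Θ₂⁻¹) *ᵥ v) ≤ -lam₂ * (v ⬝ᵥ v))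
    (hsing : ∀ v : Fin n₁ → ℝ,
      ((Θ₂ * J₂₁ * Θ₁⁻¹) *ᵥ v) ⬝ᵥ ((Θ₂ * J₂₁ * Θ₁⁻¹) *ᵥ v) ≤ K * (v ⬝ᵥ v)) :
    ∀ v : Fin n₁ ⊕ Fin n₂ → ℝ,
      v ⬝ᵥ (symPart
          (Matrix.fromBlocks Θ₁ 0 0 (Real.sqrt (2 * lam₁ * lam₂ / K) • Θ₂) *
            Matrix.fromBlocks J₁ 0 J₂₁ J₂ *
              (Matrix.fromBlocks Θ₁ 0 0 (Real.sqrt (2 * lam₁ * lam₂ / K) • Θ₂))⁻¹) *ᵥ v)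
        ≤ -(1 / 2) * (lam₁ + lam₂ - Real.sqrt (lam₁ ^ 2 + lam₂ ^ 2)) * (v ⬝ᵥ v) := by
  intro v
  set ε := √(2 * lam₁ * lam₂ / K)
  have hε : ε ≠ 0 := (Real.sqrt_pos.mpr (by positivity)).ne'
  have hεΘ₂ : IsUnit (ε • Θ₂).det := by
    rw [det_smul]; exact (hε.isUnit.pow _).mul hΘ₂
  have hD : (ε • Θ₂) * J₂ * (ε • Θ₂)⁻¹ = Θ₂ * J₂ * Θ₂⁻¹ := by
    rw [show (ε • Θ₂)⁻¹ = ε⁻¹ • Θ₂⁻¹ from inv_smul' Θ₂ (Units.mk0 ε hε) hΘ₂]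
    simp [smul_smul, hε]
  have hC : (ε • Θ₂) * J₂₁ * Θ₁⁻¹ = ε • (Θ₂ * J₂₁ * Θ₁⁻¹) := by
    simp only [Matrix.smul_mul]
  have hεK : ε ^ 2 * K = 2 * lam₁ * lam₂ := by
    rw [Real.sq_sqrt (by positivity), div_mul_cancel₀ _ hK.ne']
  have hεB : ∀ x, ((ε • (Θ₂ * J₂₁ * Θ₁⁻¹)) *ᵥ x) ⬝ᵥ ((ε • (Θ₂ * J₂₁ * Θ₁⁻¹)) *ᵥ x) ≤
      2 * lam₁ * lam₂ * (x ⬝ᵥ x) := by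
    intro x
    simp only [smul_mulVec, dotProduct_smul, smul_dotProduct, smul_eq_mul, ← hεK]
    nlinarith [mul_le_mul_of_nonneg_left (hsing x) (sq_nonneg ε)]
  have hrate : √(((lam₁ - lam₂) / 2) ^ 2 + 2 * lam₁ * lam₂ / 4) = √(lam₁ ^ 2 + lam₂ ^ 2) / 2 := by
    rw [show ((lam₁ - lam₂) / 2) ^ 2 + 2 * lam₁ * lam₂ / 4 = (lam₁ ^ 2 + lam₂ ^ 2) / 2 ^ 2 by ring,
      Real.sqrt_div' _ (by positivity), Real.sqrt_sq zero_le_two]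
  rw [fromBlocks_diagonal_conj_fromBlocks_zero₁₂ hΘ₁ hεΘ₂, hD, hC, dotProduct_symPart_mulVec]
  calc _ ≤ _ := dotProduct_fromBlocks_zero₁₂_mulVec_le (κ := 2 * lam₁ * lam₂) (by positivity)
        (fun x => (dotProduct_symPart_mulVec _ x).symm.trans_le (h₁ x))
        (fun y => (dotProduct_symPart_mulVec _ y).symm.trans_le (h₂ y)) hεB v
    _ = _ := by rw [hrate]; ring
end
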